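/- arXiv:2509.19111 — 3 statements merged into one kernel-verified Lean document; each statement's English description precedes it below -/
import Mathlib

section
/- Let τ > 0 and α > 1, with the symmetrical-optimum gains k_p = √(3/2)/(ατ), k_i = √(3/2)/(α³τ²) and crossover frequency ω_c = 1/(ατ). Then the phase margin φ_m(α) = π + arg H(i·ω_c) equals arctan(α) − arctan(1/α); moreover 0 < φ_m(α) < π/2 for every finite α > 1, and φ_m(α) → π/2 as α → ∞. -/
/-!
At the crossover frequency the symmetrical-optimum loop gain collapses to
`H(iω_c) = -(1 + iα)/(α + i)`. For `α > 1` the quotient `(1 + iα)/(α + i)` lies in the open first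
quadrant, so adding `π` to `arg H(iω_c)` just removes the sign, and the phase margin is
`arctan ((α² - 1)/(2α))`, which is `arctan α - arctan (1/α)` by the arctangent addition formula.
-/

open Real Filter

namespace Complex

theorem arg_eq_arctan_of_re_pos {z : ℂ} (hz : 0 < z.re) : arg z = Real.arctan (z.im / z.re) := by
  obtain ⟨hlo, hhi⟩ := abs_lt.1 (abs_arg_lt_pi_div_two_iff.2 (Or.inl hz))
  rw [← tan_arg, Real.arctan_tan hlo hhi]

theorem re_one_add_mul_I_div_add_I (x : ℝ) :
    ((1 + x * I) / (x + I)).re = 2 * x / (x ^ 2 + 1) := by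
  simp only [div_re, add_re, one_re, mul_re, ofReal_re, I_re, mul_zero, ofReal_im, I_im, mul_one,
    sub_self, add_zero, one_mul, normSq_apply, add_im, zero_add, one_im, mul_im]
  ring

theorem im_one_add_mul_I_div_add_I (x : ℝ) :
    ((1 + x * I) / (x + I)).im = (x ^ 2 - 1) / (x ^ 2 + 1) := by
  simp only [div_im, add_im, one_im, mul_im, ofReal_re, I_im, mul_one, ofReal_im, I_re, mul_zero,
    add_zero, zero_add, add_re, normSq_apply, one_re, mul_re, sub_self, one_div]
  ring

end Complex

namespace Real

theorem arctan_sub_arctan_one_div {x : ℝ} (hx : 0 < x) :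
    arctan x - arctan (1 / x) = arctan ((x ^ 2 - 1) / (2 * x)) := by
  rw [sub_eq_add_neg, ← arctan_neg, arctan_add (by field_simp; norm_num)]
  congr 1
  field_simp
  ring

theorem arctan_sub_arctan_one_div_pos {x : ℝ} (hx : 1 < x) : 0 < arctan x - arctan (1 / x) :=
  sub_pos.2 (arctan_strictMono ((div_lt_one (by linarith)).2 hx |>.trans hx))

theorem arctan_sub_arctan_one_div_lt_pi_div_two {x : ℝ} (hx : 0 < x) :
    arctan x - arctan (1 / x) < π / 2 := by
  have : 0 < arctan (1 / x) := arctan_zero ▸ arctan_strictMono (by positivity)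
  linarith [arctan_lt_pi_div_two x]

theorem tendsto_arctan_sub_arctan_one_div_atTop :
    Tendsto (fun x => arctan x - arctan (1 / x)) atTop (nhds (π / 2)) := by
  have hinv : Tendsto (fun x : ℝ => arctan (1 / x)) atTop (nhds 0) := by
    simpa only [one_div, arctan_zero, Function.comp_def] using
      (continuous_arctan.tendsto 0).comp tendsto_inv_atTop_zero
  simpa using (tendsto_arctan_atTop.mono_right nhdsWithin_le_nhds).sub hinv

end Real

noncomputable def srfPllOpenLoop (kp ki τ : ℝ) (s : ℂ) : ℂ :=
  (√(2 / 3) : ℂ) * ((kp : ℂ) * s + ki) / (s ^ 2 * ((τ : ℂ) * s + 1))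

theorem srfPllOpenLoop_symmetricalOptimum {α τ : ℝ} (hα : α ≠ 0) (hτ : τ ≠ 0) :
    srfPllOpenLoop (√(3 / 2) / (α * τ)) (√(3 / 2) / (α ^ 3 * τ ^ 2)) τ
        (Complex.I * ((1 / (α * τ) : ℝ) : ℂ)) = -((1 + α * Complex.I) / (α + Complex.I)) := by
  have hsqrt : (√(2 / 3) : ℂ) * √(3 / 2) = 1 := by
    rw [← Complex.ofReal_mul, ← Real.sqrt_mul (by norm_num)]
    norm_num
  have hαI : (α : ℂ) + Complex.I ≠ 0 := fun h => by simpa using congrArg Complex.im h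
  have hαC : (α : ℂ) ≠ 0 := Complex.ofReal_ne_zero.2 hα
  have hτC : (τ : ℂ) ≠ 0 := Complex.ofReal_ne_zero.2 hτ
  have hlag : (τ : ℂ) * (Complex.I * (1 / (α * τ))) + 1 = (α + Complex.I) / α := by
    field_simp
    ring
  unfold srfPllOpenLoop
  push_cast
  rw [hlag]
  field_simp
  rw [hsqrt, Complex.I_sq]
  ring

theorem pi_add_arg_srfPllOpenLoop_symmetricalOptimum {α τ : ℝ} (hα : 1 < α) (hτ : 0 < τ) :
    π + Complex.arg (srfPllOpenLoop (√(3 / 2) / (α * τ)) (√(3 / 2) / (α ^ 3 * τ ^ 2)) τ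
        (Complex.I * ((1 / (α * τ) : ℝ) : ℂ))) = arctan α - arctan (1 / α) := by
  have hα0 : 0 < α := one_pos.trans hα
  have him : 0 < ((1 + α * Complex.I) / (α + Complex.I)).im := by
    rw [Complex.im_one_add_mul_I_div_add_I]
    exact div_pos (by nlinarith) (by positivity)
  have hre : 0 < ((1 + α * Complex.I) / (α + Complex.I)).re := by
    rw [Complex.re_one_add_mul_I_div_add_I]
    positivity
  rw [srfPllOpenLoop_symmetricalOptimum hα0.ne' hτ.ne', Complex.arg_neg_eq_arg_sub_pi_of_im_pos him,
    add_sub_cancel, Complex.arg_eq_arctan_of_re_pos hre, Complex.re_one_add_mul_I_div_add_I,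
    Complex.im_one_add_mul_I_div_add_I, Real.arctan_sub_arctan_one_div hα0]
  congr 1
  field_simp

/-- Phase margin of the symmetrical-optimum SRF-PLL: with
`k_p = √(3/2)/(ατ)`, `k_i = √(3/2)/(α³τ²)` and `ω_c = 1/(ατ)`, the phase
margin `φ_m(α) = π + arg H(i ω_c)` equals `arctan α − arctan(1/α)`, satisfies
`0 < φ_m(α) < π/2` for every `α > 1`, and tends to `π/2` as `α → ∞`. -/
theorem srf_pll_symmetrical_optimum_phase_margin (τ : ℝ) (hτ : 0 < τ)
    (φm : ℝ → ℝ)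
    (hφm : ∀ α : ℝ, φm α = π + Complex.arg
      ((Real.sqrt (2 / 3) : ℂ) *
          (((Real.sqrt (3 / 2) / (α * τ) : ℝ) : ℂ) * (Complex.I * ((1 / (α * τ) : ℝ) : ℂ)) +
            ((Real.sqrt (3 / 2) / (α ^ 3 * τ ^ 2) : ℝ) : ℂ)) /
        ((Complex.I * ((1 / (α * τ) : ℝ) : ℂ)) ^ 2 *
          ((τ : ℂ) * (Complex.I * ((1 / (α * τ) : ℝ) : ℂ)) + 1)))) :
    (∀ α : ℝ, 1 < α →
      φm α = arctan α - arctan (1 / α) ∧ 0 < φm α ∧ φm α < π / 2) ∧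
    Tendsto φm atTop (nhds (π / 2)) := by
  have hφ : ∀ α, 1 < α → φm α = arctan α - arctan (1 / α) := fun α hα =>
    (hφm α).trans (pi_add_arg_srfPllOpenLoop_symmetricalOptimum hα hτ)
  refine ⟨fun α hα => ?_, ?_⟩
  · rw [hφ α hα]
    exact ⟨rfl, Real.arctan_sub_arctan_one_div_pos hα,
      Real.arctan_sub_arctan_one_div_lt_pi_div_two (one_pos.trans hα)⟩
  · refine Real.tendsto_arctan_sub_arctan_one_div_atTop.congr' ?_
    filter_upwards [eventually_gt_atTop 1] with α hα
    exact (hφ α hα).symm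
end

section
/- Let τ > 0 and α > 0. The closed-loop characteristic polynomial of the symmetrical-optimum SRF-PLL, p(s) = τ·s³ + s² + (1/(ατ))·s + 1/(α³τ²), is Hurwitz (every complex root z of p satisfies Re z < 0) if and only if α > 1. -/
/-!
Multiplying by `α³τ²`, the characteristic polynomial factors as
`(ατs + 1)(α²τ²s² + (α² - α)τs + 1)`. The linear factor always has a negative root. A real
quadratic with positive leading and constant coefficients has all its roots in the open left
half-plane exactly when its middle coefficient is positive, and here that coefficient
`(α² - α)τ` is positive exactly when `α > 1`.
-/

open Complex

theorem re_neg_of_linear_eq_zero {a b : ℝ} (ha : 0 < a) (hb : 0 < b) {z : ℂ}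
    (hz : (a : ℂ) * z + b = 0) : z.re < 0 := by
  have hre : a * z.re + b = 0 := by simpa using congrArg re hz
  nlinarith

theorem re_neg_of_quadratic_eq_zero {a b c : ℝ} (ha : 0 < a) (hb : 0 < b) (hc : 0 < c) {z : ℂ}
    (hz : (a : ℂ) * z ^ 2 + b * z + c = 0) : z.re < 0 := by
  have hre : a * (z.re ^ 2 - z.im ^ 2) + b * z.re + c = 0 := by
    simpa [sq] using congrArg re hz
  have him' : a * (z.re * z.im + z.im * z.re) + b * z.im = 0 := by
    simpa [sq] using congrArg im hz
  have him : (2 * a * z.re + b) * z.im = 0 := by linear_combination him'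
  rcases mul_eq_zero.mp him with hvertex | hreal
  · nlinarith
  · rw [hreal] at hre
    nlinarith

/-- By Vieta the two roots have real parts summing to `-b/a ≥ 0`. -/
theorem exists_quadratic_eq_zero_re_nonneg {a b : ℝ} (ha : 0 < a) (hb : b ≤ 0) (c : ℂ) :
    ∃ z : ℂ, (a : ℂ) * z ^ 2 + b * z + c = 0 ∧ 0 ≤ z.re := by
  have ha' : (a : ℂ) ≠ 0 := ofReal_ne_zero.mpr ha.ne'
  obtain ⟨s, hs⟩ := IsAlgClosed.exists_pow_nat_eq (discrim (a : ℂ) b c) two_pos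
  obtain ⟨x, hx⟩ := exists_quadratic_eq_zero ha' ⟨s, by rw [← hs, sq]⟩
  have hx : (a : ℂ) * x ^ 2 + b * x + c = 0 := by rw [sq]; exact hx
  set y := -(b / a : ℝ) - x with hy
  have hy_root : (a : ℂ) * y ^ 2 + b * y + c = 0 := by
    rw [← hx, hy]; push_cast; field_simp; ring
  have hsum : x.re + y.re = -(b / a) := by simp [hy]
  have hsum_nonneg : 0 ≤ -(b / a) := neg_nonneg.mpr (div_nonpos_of_nonpos_of_nonneg hb ha.le)
  by_cases hx_re : 0 ≤ x.re
  · exact ⟨x, hx, hx_re⟩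
  · exact ⟨y, hy_root, by linarith⟩

noncomputable def srfPllCharPoly (τ α : ℝ) (z : ℂ) : ℂ :=
  (τ : ℂ) * z ^ 3 + z ^ 2 + ((1 / (α * τ) : ℝ) : ℂ) * z + ((1 / (α ^ 3 * τ ^ 2) : ℝ) : ℂ)

theorem srfPllCharPoly_eq_zero_iff {τ α : ℝ} (hτ : τ ≠ 0) (hα : α ≠ 0) (z : ℂ) :
    srfPllCharPoly τ α z = 0 ↔
      ((α * τ : ℝ) : ℂ) * z + 1 = 0 ∨
        ((α ^ 2 * τ ^ 2 : ℝ) : ℂ) * z ^ 2 + ((α ^ 2 - α) * τ : ℝ) * z + 1 = 0 := by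
  have hτ' : (τ : ℂ) ≠ 0 := ofReal_ne_zero.mpr hτ
  have hα' : (α : ℂ) ≠ 0 := ofReal_ne_zero.mpr hα
  have factor : (α : ℂ) ^ 3 * τ ^ 2 * srfPllCharPoly τ α z =
      (((α * τ : ℝ) : ℂ) * z + 1) *
        (((α ^ 2 * τ ^ 2 : ℝ) : ℂ) * z ^ 2 + ((α ^ 2 - α) * τ : ℝ) * z + 1) := by
    unfold srfPllCharPoly; push_cast; field_simp; ring
  rw [← mul_eq_zero, ← factor]
  simp [hτ', hα']

/-- Hurwitz stability of the symmetrical-optimum SRF-PLL closed loop: the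
characteristic polynomial `p(s) = τs³ + s² + s/(ατ) + 1/(α³τ²)` has all its
complex roots in the open left half-plane if and only if `α > 1`. -/
theorem srf_pll_characteristic_hurwitz_iff (τ α : ℝ) (hτ : 0 < τ) (hα : 0 < α) :
    (∀ z : ℂ, (τ : ℂ) * z ^ 3 + z ^ 2 + ((1 / (α * τ) : ℝ) : ℂ) * z +
        ((1 / (α ^ 3 * τ ^ 2) : ℝ) : ℂ) = 0 → z.re < 0) ↔ 1 < α := by
  change (∀ z, srfPllCharPoly τ α z = 0 → z.re < 0) ↔ 1 < α
  simp only [srfPllCharPoly_eq_zero_iff hτ.ne' hα.ne']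
  constructor
  · intro hurwitz
    by_contra! hα1
    have hb : (α ^ 2 - α) * τ ≤ 0 :=
      mul_nonpos_of_nonpos_of_nonneg (by nlinarith) hτ.le
    obtain ⟨z, hz, hz_re⟩ :=
      exists_quadratic_eq_zero_re_nonneg (a := α ^ 2 * τ ^ 2) (by positivity) hb 1
    exact (hurwitz z (Or.inr hz)).not_ge hz_re
  · rintro hα1 z (hlin | hquad)
    · exact re_neg_of_linear_eq_zero (a := α * τ) (by positivity) one_pos hlin
    · have hb : 0 < (α ^ 2 - α) * τ := mul_pos (by nlinarith) hτ
      exact re_neg_of_quadratic_eq_zero (a := α ^ 2 * τ ^ 2) (by positivity) hb one_pos hquad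
end

section
/- For all ω̃ > 0 and ω > 0, the principal argument of the estimator filter frequency response G_ω̃(iω) = 2ω̃·iω/((iω)² + 2ω̃·iω + ω̃²) has the same sign as ω̃ − ω: arg G_ω̃(iω) > 0 if ω̃ > ω, arg G_ω̃(iω) < 0 if ω̃ < ω, and arg G_ω̃(iω) = 0 if ω̃ = ω. -/
/-- Phase of the estimator filter `G_ω̃(s) = 2ω̃s/(s² + 2ω̃s + ω̃²)` at a
frequency `ω > 0`: the principal argument of `G_ω̃(iω)` has the same sign as
`ω̃ − ω`. -/
theorem estimator_filter_phase_sign (ω' ω : ℝ) (hω' : 0 < ω') (hω : 0 < ω) :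
    (ω < ω' → 0 < Complex.arg ((2 * (ω' : ℂ) * (Complex.I * (ω : ℂ))) /
        ((Complex.I * (ω : ℂ)) ^ 2 + 2 * (ω' : ℂ) * (Complex.I * (ω : ℂ)) + (ω' : ℂ) ^ 2))) ∧
    (ω' < ω → Complex.arg ((2 * (ω' : ℂ) * (Complex.I * (ω : ℂ))) /
        ((Complex.I * (ω : ℂ)) ^ 2 + 2 * (ω' : ℂ) * (Complex.I * (ω : ℂ)) + (ω' : ℂ) ^ 2)) < 0) ∧
    (ω' = ω → Complex.arg ((2 * (ω' : ℂ) * (Complex.I * (ω : ℂ))) /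
        ((Complex.I * (ω : ℂ)) ^ 2 + 2 * (ω' : ℂ) * (Complex.I * (ω : ℂ)) + (ω' : ℂ) ^ 2)) = 0) := by
  set a : ℝ := 2 * ω' * ω with ha
  set b : ℝ := ω' ^ 2 - ω ^ 2 with hb
  have hapos : 0 < a := by positivity
  have hd : 0 < a ^ 2 + b ^ 2 := by positivity
  have hnum : (2 * (ω' : ℂ) * (Complex.I * (ω : ℂ))) = (a : ℂ) * Complex.I := by
    rw [ha]; push_cast; ring
  have hden2 : ((Complex.I * (ω : ℂ)) ^ 2 + 2 * (ω' : ℂ) * (Complex.I * (ω : ℂ)) + (ω' : ℂ) ^ 2)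
      = (b : ℂ) + (a : ℂ) * Complex.I := by
    rw [ha, hb]; push_cast
    linear_combination ((ω : ℂ))^2 * Complex.I_sq
  have hden' : (b : ℂ) + (a : ℂ) * Complex.I ≠ 0 := by
    intro h
    have := congrArg Complex.im h
    simp at this
    exact hapos.ne' this
  have hz : (2 * (ω' : ℂ) * (Complex.I * (ω : ℂ))) /
      ((Complex.I * (ω : ℂ)) ^ 2 + 2 * (ω' : ℂ) * (Complex.I * (ω : ℂ)) + (ω' : ℂ) ^ 2)
      = ((a ^ 2 / (a ^ 2 + b ^ 2) : ℝ) : ℂ) + ((a * b / (a ^ 2 + b ^ 2) : ℝ) : ℂ) * Complex.I := by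
    rw [hden2, hnum, div_eq_iff hden']
    have hd0 : ((a : ℂ)) ^ 2 + (b : ℂ) ^ 2 ≠ 0 := by
      exact_mod_cast Complex.ofReal_ne_zero.mpr hd.ne'
    push_cast
    field_simp
    ring_nf
    simp only [Complex.I_sq]
    ring
  rw [hz]
  have hre : (((a ^ 2 / (a ^ 2 + b ^ 2) : ℝ) : ℂ) + ((a * b / (a ^ 2 + b ^ 2) : ℝ) : ℂ) * Complex.I).re = a ^ 2 / (a ^ 2 + b ^ 2) := by
    simp only [Complex.add_re, Complex.ofReal_re, Complex.mul_re, Complex.ofReal_im,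
      Complex.I_re, Complex.I_im]; ring
  have him : (((a ^ 2 / (a ^ 2 + b ^ 2) : ℝ) : ℂ) + ((a * b / (a ^ 2 + b ^ 2) : ℝ) : ℂ) * Complex.I).im = a * b / (a ^ 2 + b ^ 2) := by
    simp only [Complex.add_im, Complex.ofReal_im, Complex.mul_im, Complex.ofReal_re,
      Complex.I_re, Complex.I_im]; ring
  refine ⟨fun h => ?_, fun h => ?_, fun h => ?_⟩
  · have hbpos : 0 < b := by rw [hb]; nlinarith
    have himpos : 0 < a * b / (a ^ 2 + b ^ 2) := by positivity
    have h0 : 0 ≤ Complex.arg _ := Complex.arg_nonneg_iff.mpr (by rw [him]; exact himpos.le)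
    refine lt_of_le_of_ne h0 fun h' => ?_
    have := (Complex.arg_eq_zero_iff.mp h'.symm).2
    rw [him] at this
    exact himpos.ne' this
  · apply Complex.arg_neg_iff.mpr
    rw [him]
    have hbneg : b < 0 := by rw [hb]; nlinarith
    exact div_neg_of_neg_of_pos (by nlinarith) hd
  · apply Complex.arg_eq_zero_iff.mpr
    constructor
    · rw [hre]; positivity
    · rw [him, hb, h]; ring
end
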